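/- arXiv:2504.13478 — 6 statements merged into one kernel-verified Lean document; each statement's English description precedes it below -/
import Mathlib

section
/- Let γ > 0 be a learning rate and δ ∈ (0,1) a target level. Let e : ℕ → ℝ be a sequence with e t ∈ {0,1} for all t ≥ 1, and let δ' : ℕ → ℝ satisfy the adaptive conformal prediction recursion δ'(t+1) = δ'(t) + γ·(δ − e t) for all t ≥ 1, with initial value δ'(1) = δ₁ ∈ [0,1]. Suppose that for every t ≥ 1, δ'(t) < 0 implies e t = 0, and δ'(t) > 1 implies e t = 1. Then for every T ≥ 1, |(1/T)·∑_{t=1}^{T} e t − δ| ≤ (max(δ₁, 1 − δ₁) + γ) / (T·γ). -/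
/-!
Each step moves `δ'` by at most `γ`, and outside `[0, 1]` the miscoverage indicator pushes it
back towards `[0, 1]`, so `δ'` never leaves `[-γ, 1 + γ]`. Telescoping the recursion gives
`δ₁ - δ'(T+1) = γ (∑ e t - T δ)`, so the deviation of the average miscoverage from `δ` is the
distance from `δ₁` to a point of `[-γ, 1 + γ]`, divided by `T γ`.
-/

open Finset Set

namespace AdaptiveConformal

theorem add_mul_sub_mem_Icc {γ δ x e : ℝ} (hγ : 0 ≤ γ) (hδ : δ ∈ Icc (0 : ℝ) 1)
    (he : e = 0 ∨ e = 1) (hlow : x < 0 → e = 0) (hhigh : x > 1 → e = 1)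
    (hx : x ∈ Icc (-γ) (1 + γ)) : x + γ * (δ - e) ∈ Icc (-γ) (1 + γ) := by
  have hγδ_nonneg : 0 ≤ γ * δ := mul_nonneg hγ hδ.1
  have hγδ_le : γ * δ ≤ γ := mul_le_of_le_one_right hγ hδ.2
  obtain ⟨hx_lo, hx_hi⟩ := hx
  rcases he with rfl | rfl
  · have hx_le : x ≤ 1 := not_lt.mp fun h => zero_ne_one (hhigh h)
    constructor <;> linarith
  · have hx_nonneg : 0 ≤ x := not_lt.mp fun h => one_ne_zero (hlow h)
    constructor <;> linarith

theorem mem_Icc_of_recursion {γ δ : ℝ} {e δ' : ℕ → ℝ} (hγ : 0 ≤ γ) (hδ : δ ∈ Icc (0 : ℝ) 1)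
    (he : ∀ t, 1 ≤ t → e t = 0 ∨ e t = 1)
    (hrec : ∀ t, 1 ≤ t → δ' (t + 1) = δ' t + γ * (δ - e t))
    (hinit : δ' 1 ∈ Icc (0 : ℝ) 1)
    (hlow : ∀ t, 1 ≤ t → δ' t < 0 → e t = 0)
    (hhigh : ∀ t, 1 ≤ t → δ' t > 1 → e t = 1) :
    ∀ t, 1 ≤ t → δ' t ∈ Icc (-γ) (1 + γ) := by
  intro t ht
  induction t, ht using Nat.le_induction with
  | base => exact ⟨by linarith [hinit.1], by linarith [hinit.2]⟩
  | succ t ht ih =>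
    rw [hrec t ht]
    exact add_mul_sub_mem_Icc hγ hδ (he t ht) (hlow t ht) (hhigh t ht) ih

theorem recursion_eq_add_sum {γ δ : ℝ} {e δ' : ℕ → ℝ}
    (hrec : ∀ t, 1 ≤ t → δ' (t + 1) = δ' t + γ * (δ - e t)) (T : ℕ) :
    δ' (T + 1) = δ' 1 + γ * (T * δ - ∑ t ∈ Icc 1 T, e t) := by
  induction T with
  | zero => simp
  | succ T ih =>
    rw [hrec (T + 1) (by omega), ih, sum_Icc_succ_top (by omega)]
    push_cast
    ring

theorem abs_sub_le_max_add {a x γ : ℝ} (hx : x ∈ Icc (-γ) (1 + γ)) :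
    |a - x| ≤ max a (1 - a) + γ := by
  have := le_max_left a (1 - a)
  have := le_max_right a (1 - a)
  rw [abs_le]
  constructor <;> linarith [hx.1, hx.2]

end AdaptiveConformal

open AdaptiveConformal in
/-- Proposition 1 (Gibbs & Candès): the adaptive conformal prediction recursion
`δ'(t+1) = δ'(t) + γ·(δ − e t)` with miscoverage indicators `e t ∈ {0,1}` satisfies
`|(1/T)·∑_{t=1}^T e t − δ| ≤ (max(δ₁, 1−δ₁) + γ)/(T·γ)` for all `T ≥ 1`. -/
theorem acp_coverage_bound
    (γ δ δ₁ : ℝ) (hγ : 0 < γ) (hδ : δ ∈ Set.Ioo (0 : ℝ) 1)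
    (e δ' : ℕ → ℝ)
    (he : ∀ t, 1 ≤ t → e t = 0 ∨ e t = 1)
    (hrec : ∀ t, 1 ≤ t → δ' (t + 1) = δ' t + γ * (δ - e t))
    (hinit : δ' 1 = δ₁) (hδ₁ : δ₁ ∈ Set.Icc (0 : ℝ) 1)
    (hlow : ∀ t, 1 ≤ t → δ' t < 0 → e t = 0)
    (hhigh : ∀ t, 1 ≤ t → δ' t > 1 → e t = 1) :
    ∀ T : ℕ, 1 ≤ T →
      |(1 / (T : ℝ)) * ∑ t ∈ Finset.Icc 1 T, e t - δ| ≤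
        (max δ₁ (1 - δ₁) + γ) / ((T : ℝ) * γ) := by
  intro T hT
  have hTγ : (0 : ℝ) < T * γ := mul_pos (by exact_mod_cast hT) hγ
  have hbounded := mem_Icc_of_recursion hγ.le (Ioo_subset_Icc_self hδ) he hrec
    (hinit ▸ hδ₁) hlow hhigh (T + 1) (by omega)
  have hsum := recursion_eq_add_sum hrec T
  have hgap : (1 / (T : ℝ)) * ∑ t ∈ Icc 1 T, e t - δ = (δ₁ - δ' (T + 1)) / (T * γ) := by
    field_simp
    linear_combination hsum + hinit
  rw [hgap, abs_div, abs_of_pos hTγ]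
  exact div_le_div_of_nonneg_right (abs_sub_le_max_add hbounded) hTγ.le
end

section
/- Let γ > 0, δ ∈ (0,1), e : ℕ → ℝ with e t ∈ {0,1} for all t ≥ 1, and δ' : ℕ → ℝ with δ'(t+1) = δ'(t) + γ·(δ − e t) for all t ≥ 1 and δ'(1) ∈ [0,1]. Suppose that for every t ≥ 1, δ'(t) < 0 implies e t = 0, and δ'(t) > 1 implies e t = 1. Then for every t ≥ 1, −γ ≤ δ'(t) ≤ 1 + γ. -/
/-- Boundedness of the effective significance level in adaptive conformal prediction:
under the ACP recursion with indicator-valued errors and the boundary behavior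
(`δ' t < 0 → e t = 0`, `δ' t > 1 → e t = 1`), we have `−γ ≤ δ' t ≤ 1 + γ` for all `t ≥ 1`. -/
theorem acp_level_bounded
    (γ δ : ℝ) (hγ : 0 < γ) (hδ : δ ∈ Set.Ioo (0 : ℝ) 1)
    (e δ' : ℕ → ℝ)
    (he : ∀ t, 1 ≤ t → e t = 0 ∨ e t = 1)
    (hrec : ∀ t, 1 ≤ t → δ' (t + 1) = δ' t + γ * (δ - e t))
    (hinit : δ' 1 ∈ Set.Icc (0 : ℝ) 1)
    (hlow : ∀ t, 1 ≤ t → δ' t < 0 → e t = 0)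
    (hhigh : ∀ t, 1 ≤ t → δ' t > 1 → e t = 1) :
    ∀ t : ℕ, 1 ≤ t → -γ ≤ δ' t ∧ δ' t ≤ 1 + γ := by
  intro t ht
  induction t with
  | zero => omega
  | succ n ih =>
    rcases Nat.eq_or_lt_of_le ht with h1 | h1
    · have : n + 1 = 1 := h1.symm
      rw [this]
      obtain ⟨h0, h1'⟩ := hinit
      constructor <;> nlinarith
    · have hn : 1 ≤ n := by omega
      obtain ⟨hl, hu⟩ := ih hn
      obtain ⟨hδ0, hδ1⟩ := hδ
      rw [hrec n hn]
      rcases lt_trichotomy (δ' n) 0 with hc | hc | hc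
      · rw [hlow n hn hc]
        constructor <;> nlinarith
      · rcases he n hn with he0 | he0 <;> rw [he0] <;>
          constructor <;> nlinarith
      · rcases lt_or_ge 1 (δ' n) with hc2 | hc2
        · rw [hhigh n hn hc2]
          constructor <;> nlinarith
        · rcases he n hn with he0 | he0 <;> rw [he0] <;>
            constructor <;> nlinarith
end

section
/- Let γ > 0, δ ∈ (0,1), e : ℕ → ℝ with e t ∈ {0,1} for all t ≥ 1, and δ' : ℕ → ℝ with δ'(t+1) = δ'(t) + γ·(δ − e t) for all t ≥ 1 and δ'(1) ∈ [0,1]. Suppose that for every t ≥ 1, δ'(t) < 0 implies e t = 0, and δ'(t) > 1 implies e t = 1. Then the sequence T ↦ (1/T)·∑_{t=1}^{T} e t converges to δ as T → ∞. -/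
open Filter

/-- Asymptotic form of Proposition 1 (Gibbs & Candès): under the ACP recursion,
the running average of the miscoverage indicators converges to the target level `δ`. -/
theorem acp_coverage_limit
    (γ δ : ℝ) (hγ : 0 < γ) (hδ : δ ∈ Set.Ioo (0 : ℝ) 1)
    (e δ' : ℕ → ℝ)
    (he : ∀ t, 1 ≤ t → e t = 0 ∨ e t = 1)
    (hrec : ∀ t, 1 ≤ t → δ' (t + 1) = δ' t + γ * (δ - e t))
    (hinit : δ' 1 ∈ Set.Icc (0 : ℝ) 1)
    (hlow : ∀ t, 1 ≤ t → δ' t < 0 → e t = 0)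
    (hhigh : ∀ t, 1 ≤ t → δ' t > 1 → e t = 1) :
    Tendsto (fun T : ℕ => (1 / (T : ℝ)) * ∑ t ∈ Finset.Icc 1 T, e t)
      atTop (nhds δ) := by
  obtain ⟨hδ0, hδ1⟩ := hδ
  -- boundedness of δ'
  have hbd : ∀ t, 1 ≤ t → -γ ≤ δ' t ∧ δ' t ≤ 1 + γ := by
    intro t ht
    induction t with
    | zero => omega
    | succ n ih =>
      rcases Nat.eq_or_lt_of_le ht with h1 | h1
      · rw [← h1]
        exact ⟨le_trans (by linarith) hinit.1, le_trans hinit.2 (by linarith)⟩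
      · have hn : 1 ≤ n := Nat.lt_succ_iff.mp h1
        obtain ⟨ihl, ihu⟩ := ih hn
        rw [hrec n hn]
        have hee : e n = 0 ∨ e n = 1 := he n hn
        constructor
        · by_cases h : δ' n < 0
          · rw [hlow n hn h]; nlinarith
          · push_neg at h
            rcases hee with h0 | h0 <;> rw [h0] <;> nlinarith
        · by_cases h : δ' n > 1
          · rw [hhigh n hn h]; nlinarith
          · push_neg at h
            rcases hee with h0 | h0 <;> rw [h0] <;> nlinarith
  -- telescoping sum
  have htel : ∀ T : ℕ, γ * ∑ t ∈ Finset.Icc 1 T, (δ - e t) = δ' (T + 1) - δ' 1 := by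
    intro T
    induction T with
    | zero => simp
    | succ n ih =>
      rw [Finset.sum_Icc_succ_top (by omega : 1 ≤ n + 1), mul_add, ih,
        hrec (n + 1) (by omega)]
      ring
  have hsum : ∀ T : ℕ, ∑ t ∈ Finset.Icc 1 T, e t
      = T * δ - (δ' (T + 1) - δ' 1) / γ := by
    intro T
    have h := htel T
    rw [Finset.sum_sub_distrib, Finset.sum_const] at h
    have hcard : (Finset.Icc 1 T).card = T := by
      rw [Nat.card_Icc]; omega
    rw [hcard, nsmul_eq_mul] at h
    rw [← h, mul_div_cancel_left₀ _ hγ.ne']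
    ring
  -- rewrite the function
  have heq : ∀ᶠ T : ℕ in atTop,
      (1 / (T : ℝ)) * ∑ t ∈ Finset.Icc 1 T, e t
        = δ - (δ' (T + 1) - δ' 1) / (γ * T) := by
    filter_upwards [eventually_ge_atTop 1] with T hT
    have hT0 : (T : ℝ) ≠ 0 := by positivity
    rw [hsum T]
    field_simp
  rw [Filter.tendsto_congr' heq]
  have h0 : Tendsto (fun T : ℕ => (δ' (T + 1) - δ' 1) / (γ * T)) atTop (nhds 0) := by
    apply squeeze_zero_norm' (a := fun T : ℕ => (2 + 2 * γ) / (γ * T))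
    · filter_upwards [eventually_ge_atTop 1] with T hT
      have hT1 : (1 : ℝ) ≤ (T : ℝ) := by exact_mod_cast hT
      have hb1 := hbd (T + 1) (by omega)
      have hden : 0 < γ * T := by positivity
      rw [Real.norm_eq_abs, abs_div, abs_of_pos hden]
      gcongr
      rw [abs_le]
      constructor <;> nlinarith [hb1.1, hb1.2, hinit.1, hinit.2]
    · have h1 : Tendsto (fun T : ℕ => γ * (T : ℝ)) atTop atTop :=
        Tendsto.const_mul_atTop hγ tendsto_natCast_atTop_atTop
      exact h1.const_div_atTop _
  have := tendsto_const_nhds (x := δ) (f := atTop (α := ℕ)) |>.sub h0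
  simpa using this
end

section
/- Let (Ω, 𝔉, μ) be a probability space, γ > 0 a learning rate, δ ∈ (0,1) a target failure probability, t₀ ≥ 1 an initial time, and T ≥ 1 a number of time steps. For each t let R_t : Ω → ℝ and C_t : Ω → ℝ be measurable (R_t is the robustness prediction error ρ̂_t − ρ_t and C_t the ACP prediction-region threshold), and define the miscoverage indicator e_t(ω) = 1 if R_t(ω) > C_t(ω) and e_t(ω) = 0 otherwise. Let δ'_t : Ω → ℝ satisfy, for every ω, the ACP recursion δ'_{t+1}(ω) = δ'_t(ω) + γ·(δ − e_t(ω)) for all t ≥ t₀, with δ'_{t₀}(ω) = δ, and suppose that for every t ≥ t₀ and every ω, δ'_t(ω) < 0 implies e_t(ω) = 0 and δ'_t(ω) > 1 implies e_t(ω) = 1. Then 1 − δ − p₁ ≤ (1/T)·∑_{t=t₀}^{t₀+T−1} μ{ω : R_t(ω) ≤ C_t(ω)} ≤ 1 − δ + p₂, where p₁ = (δ + γ)/(T·γ) and p₂ = ((1 − δ) + γ)/(T·γ). -/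
/-!
The ACP recursion telescopes: `δ'_{t₀+n} = δ + γ (n δ - ∑_{i<n} e_{t₀+i})`. The saturation rules
(`e = 0` below `0`, `e = 1` above `1`) keep `δ'` inside `[-γ, 1 + γ]` along every sample path, so
for every `ω` the number of miscoverages in `T` steps lies within `(1 - δ + γ) / γ`, resp.
`(δ + γ) / γ`, of `T δ`. Taking expectations turns these pathwise counts into sums of miscoverage
probabilities.
-/

open MeasureTheory Finset

section Recursion

variable {γ δ : ℝ} {d err : ℕ → ℝ}

theorem acp_iterate_eq_add_mul_sum (hrec : ∀ n, d (n + 1) = d n + γ * (δ - err n)) (n : ℕ) :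
    d n = d 0 + γ * (n * δ - ∑ i ∈ range n, err i) := by
  have h := sum_range_sub d n
  simp only [hrec, add_sub_cancel_left, ← mul_sum, sum_sub_distrib, sum_const, card_range,
    nsmul_eq_mul] at h
  linarith

theorem acp_iterate_mem_Icc (hγ : 0 ≤ γ) (hδ : δ ∈ Set.Icc 0 1) (herr : ∀ n, err n ∈ Set.Icc 0 1)
    (hrec : ∀ n, d (n + 1) = d n + γ * (δ - err n)) (hlow : ∀ n, d n < 0 → err n = 0)
    (hhigh : ∀ n, 1 < d n → err n = 1) (h0 : d 0 ∈ Set.Icc (-γ) (1 + γ)) (n : ℕ) :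
    d n ∈ Set.Icc (-γ) (1 + γ) := by
  induction n with
  | zero => exact h0
  | succ n ih =>
    obtain ⟨hδ0, hδ1⟩ := hδ
    obtain ⟨herr0, herr1⟩ := herr n
    rw [hrec, Set.mem_Icc]
    have := mul_nonneg hγ hδ0
    have := mul_nonneg hγ (sub_nonneg.2 hδ1)
    have := mul_nonneg hγ herr0
    have := mul_nonneg hγ (sub_nonneg.2 herr1)
    rcases lt_or_ge (d n) 0 with hneg | hnonneg
    · rw [hlow n hneg]; constructor <;> linarith [ih.1]
    rcases lt_or_ge 1 (d n) with hbig | hle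
    · rw [hhigh n hbig]; constructor <;> linarith [ih.2]
    constructor <;> linarith

theorem acp_sum_err_mem_Icc (hγ : 0 < γ) (hδ : δ ∈ Set.Icc 0 1) (herr : ∀ n, err n ∈ Set.Icc 0 1)
    (hrec : ∀ n, d (n + 1) = d n + γ * (δ - err n)) (hlow : ∀ n, d n < 0 → err n = 0)
    (hhigh : ∀ n, 1 < d n → err n = 1) (h0 : d 0 = δ) (n : ℕ) :
    ∑ i ∈ range n, err i ∈ Set.Icc (n * δ - (1 - δ + γ) / γ) (n * δ + (δ + γ) / γ) := by
  have h0_mem : d 0 ∈ Set.Icc (-γ) (1 + γ) := by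
    rw [h0]; constructor <;> linarith [hδ.1, hδ.2]
  obtain ⟨hlo, hhi⟩ := acp_iterate_mem_Icc hγ.le hδ herr hrec hlow hhigh h0_mem n
  rw [acp_iterate_eq_add_mul_sum hrec, h0] at hlo hhi
  constructor
  · rw [sub_le_comm, le_div_iff₀ hγ]; linarith
  · rw [← sub_le_iff_le_add', le_div_iff₀ hγ]; linarith

end Recursion

section Probability

variable {Ω : Type*} [MeasurableSpace Ω] {μ : Measure Ω} [IsProbabilityMeasure μ]

theorem integral_mem_Icc_of_forall_mem_Icc {f : Ω → ℝ} {a b : ℝ} (hf : Integrable f μ)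
    (h : ∀ ω, f ω ∈ Set.Icc a b) : ∫ ω, f ω ∂μ ∈ Set.Icc a b := by
  have h_const (c : ℝ) : ∫ _, c ∂μ = c := by simp
  exact ⟨h_const a ▸ integral_mono (integrable_const a) hf fun ω => (h ω).1,
    h_const b ▸ integral_mono hf (integrable_const b) fun ω => (h ω).2⟩

theorem sum_measureReal_mem_Icc_of_forall_sum_indicator_mem_Icc {ι : Type*} (s : Finset ι)
    {A : ι → Set Ω} (hA : ∀ i, MeasurableSet (A i)) {a b : ℝ}
    (h : ∀ ω, ∑ i ∈ s, (A i).indicator (1 : Ω → ℝ) ω ∈ Set.Icc a b) :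
    ∑ i ∈ s, μ.real (A i) ∈ Set.Icc a b := by
  have hint (i : ι) : Integrable ((A i).indicator 1) μ := (integrable_const (1 : ℝ)).indicator (hA i)
  have hsum : ∑ i ∈ s, μ.real (A i) = ∫ ω, ∑ i ∈ s, (A i).indicator 1 ω ∂μ := by
    rw [integral_finsetSum _ fun i _ => hint i]
    exact sum_congr rfl fun i _ => (integral_indicator_one (hA i)).symm
  exact hsum ▸ integral_mem_Icc_of_forall_mem_Icc (integrable_finsetSum _ fun i _ => hint i) h

theorem sum_probReal_compl_eq_card_sub {ι : Type*} (s : Finset ι) {A : ι → Set Ω}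
    (hA : ∀ i, MeasurableSet (A i)) :
    ∑ i ∈ s, μ.real (A i)ᶜ = #s - ∑ i ∈ s, μ.real (A i) := by
  simp [probReal_compl_eq_one_sub (hA _)]

end Probability

theorem acp_average_coverage_general
    {Ω : Type*} [MeasurableSpace Ω] (μ : Measure Ω) [IsProbabilityMeasure μ]
    (γ δ : ℝ) (hγ : 0 < γ) (hδ : δ ∈ Set.Ioo (0 : ℝ) 1)
    (t₀ T : ℕ) (hT : 1 ≤ T)
    (R C : ℕ → Ω → ℝ)
    (hR : ∀ t, Measurable (R t)) (hC : ∀ t, Measurable (C t))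
    (e : ℕ → Ω → ℝ)
    (he : ∀ t ω, e t ω = if R t ω > C t ω then 1 else 0)
    (δ' : ℕ → Ω → ℝ)
    (hrec : ∀ t, t₀ ≤ t → ∀ ω, δ' (t + 1) ω = δ' t ω + γ * (δ - e t ω))
    (hinit : ∀ ω, δ' t₀ ω = δ)
    (hlow : ∀ t, t₀ ≤ t → ∀ ω, δ' t ω < 0 → e t ω = 0)
    (hhigh : ∀ t, t₀ ≤ t → ∀ ω, δ' t ω > 1 → e t ω = 1) :
    1 - δ - (δ + γ) / ((T : ℝ) * γ) ≤
      (1 / (T : ℝ)) * ∑ t ∈ Finset.Icc t₀ (t₀ + T - 1), (μ {ω | R t ω ≤ C t ω}).toReal ∧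
    (1 / (T : ℝ)) * ∑ t ∈ Finset.Icc t₀ (t₀ + T - 1), (μ {ω | R t ω ≤ C t ω}).toReal ≤
      1 - δ + ((1 - δ) + γ) / ((T : ℝ) * γ) := by
  set miss : ℕ → Set Ω := fun t => {ω | C t ω < R t ω}
  have hmiss (t : ℕ) : MeasurableSet (miss t) := measurableSet_lt (hC t) (hR t)
  have he_indicator (t : ℕ) : e t = (miss t).indicator 1 := by
    ext ω; simp [he, Set.indicator_apply, miss]
  have hsum_miss : ∑ i ∈ range T, μ.real (miss (t₀ + i)) ∈
      Set.Icc (T * δ - (1 - δ + γ) / γ) (T * δ + (δ + γ) / γ) := by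
    refine sum_measureReal_mem_Icc_of_forall_sum_indicator_mem_Icc _ (fun i => hmiss _) fun ω => ?_
    simp only [← he_indicator]
    have he_mem (t : ℕ) : e t ω ∈ Set.Icc 0 1 := by rw [he]; split_ifs <;> simp
    exact acp_sum_err_mem_Icc (d := fun i => δ' (t₀ + i) ω) hγ ⟨hδ.1.le, hδ.2.le⟩
      (fun i => he_mem _) (fun i => hrec _ (Nat.le_add_right t₀ i) ω)
      (fun i => hlow _ (Nat.le_add_right t₀ i) ω) (fun i => hhigh _ (Nat.le_add_right t₀ i) ω)
      (hinit ω) T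
  have hcover : ∑ t ∈ Finset.Icc t₀ (t₀ + T - 1), (μ {ω | R t ω ≤ C t ω}).toReal =
      T - ∑ i ∈ range T, μ.real (miss (t₀ + i)) := by
    have hIcc : Finset.Icc t₀ (t₀ + T - 1) = Finset.Ico t₀ (t₀ + T) := by
      ext t; simp only [Finset.mem_Icc, Finset.mem_Ico]; omega
    have hcompl (t : ℕ) : {ω | R t ω ≤ C t ω} = (miss t)ᶜ := by ext ω; simp [miss]
    simp only [hIcc, sum_Ico_eq_sum_range, hcompl, ← measureReal_def, Nat.add_sub_cancel_left]
    rw [sum_probReal_compl_eq_card_sub _ fun i => hmiss (t₀ + i), card_range]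
  obtain ⟨hlo, hhi⟩ := hsum_miss
  have hT' : (0 : ℝ) < T := by exact_mod_cast hT
  rw [hcover, mul_comm (T : ℝ) γ, ← div_div, ← div_div, one_div_mul_eq_div]
  constructor
  · rw [le_div_iff₀ hT', sub_mul, div_mul_cancel₀ _ hT'.ne']; linarith
  · rw [div_le_iff₀ hT', add_mul, div_mul_cancel₀ _ hT'.ne']; linarith

/-- Lemma 1: average coverage of adaptive conformal prediction. With miscoverage
indicators `e t ω = 1` iff `R t ω > C t ω` and the ACP recursion starting at `δ` at
time `t₀`, the time-averaged coverage probability over `[t₀, t₀+T−1]` lies within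
`[1−δ−p₁, 1−δ+p₂]`, where `p₁ = (δ+γ)/(Tγ)` and `p₂ = ((1−δ)+γ)/(Tγ)`. -/
theorem acp_average_coverage
    {Ω : Type*} [MeasurableSpace Ω] (μ : Measure Ω) [IsProbabilityMeasure μ]
    (γ δ : ℝ) (hγ : 0 < γ) (hδ : δ ∈ Set.Ioo (0 : ℝ) 1)
    (t₀ T : ℕ) (ht₀ : 1 ≤ t₀) (hT : 1 ≤ T)
    (R C : ℕ → Ω → ℝ)
    (hR : ∀ t, Measurable (R t)) (hC : ∀ t, Measurable (C t))
    (e : ℕ → Ω → ℝ)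
    (he : ∀ t ω, e t ω = if R t ω > C t ω then 1 else 0)
    (δ' : ℕ → Ω → ℝ)
    (hrec : ∀ t, t₀ ≤ t → ∀ ω, δ' (t + 1) ω = δ' t ω + γ * (δ - e t ω))
    (hinit : ∀ ω, δ' t₀ ω = δ)
    (hlow : ∀ t, t₀ ≤ t → ∀ ω, δ' t ω < 0 → e t ω = 0)
    (hhigh : ∀ t, t₀ ≤ t → ∀ ω, δ' t ω > 1 → e t ω = 1) :
    1 - δ - (δ + γ) / ((T : ℝ) * γ) ≤
      (1 / (T : ℝ)) * ∑ t ∈ Finset.Icc t₀ (t₀ + T - 1), (μ {ω | R t ω ≤ C t ω}).toReal ∧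
    (1 / (T : ℝ)) * ∑ t ∈ Finset.Icc t₀ (t₀ + T - 1), (μ {ω | R t ω ≤ C t ω}).toReal ≤
      1 - δ + ((1 - δ) + γ) / ((T : ℝ) * γ) :=
  acp_average_coverage_general μ γ δ hγ hδ t₀ T hT R C hR hC e he δ' hrec hinit hlow hhigh
end

section
/- Let (Ω, 𝔉, μ) be a probability space, γ > 0, and δ ∈ (0,1). For each t ≥ 1 let R_t : Ω → ℝ and C_t : Ω → ℝ be measurable, and define e_t(ω) = 1 if R_t(ω) > C_t(ω) and e_t(ω) = 0 otherwise. Let δ'_t : Ω → ℝ satisfy, for every ω, δ'_{t+1}(ω) = δ'_t(ω) + γ·(δ − e_t(ω)) for all t ≥ 1, with δ'_1(ω) = δ, and suppose that for every t ≥ 1 and every ω, δ'_t(ω) < 0 implies e_t(ω) = 0 and δ'_t(ω) > 1 implies e_t(ω) = 1. Then the sequence T ↦ (1/T)·∑_{t=1}^{T} μ{ω : R_t(ω) ≤ C_t(ω)} converges to 1 − δ as T → ∞. -/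
/-!
Each `e t ω` lies in `[0, 1]`, and the clipping rules (`δ'_t < 0 ⇒ e_t = 0`, `δ'_t > 1 ⇒ e_t = 1`)
keep every path `t ↦ δ'_t ω` inside `[-γ, 1 + γ]`. Telescoping the update gives
`γ · ∑_{t ≤ T} (δ - e_t ω) = δ'_{T+1} ω - δ`, so these partial sums are bounded by `(1 + γ) / γ`
uniformly in `T` and `ω`. Integrating, `∫ (δ - e_t) = μ{R_t ≤ C_t} - (1 - δ)`, so the partial sums
of the coverage errors are bounded as well and their Cesàro averages tend to `0`.
-/

open MeasureTheory Filter Finset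

section Deterministic

variable {γ δ : ℝ} {d e : ℕ → ℝ}

theorem acp_step_mem_Icc {x ε : ℝ} (hγ : 0 ≤ γ) (hδ : δ ∈ Set.Icc 0 1)
    (hx : x ∈ Set.Icc (-γ) (1 + γ)) (hε : ε ∈ Set.Icc 0 1)
    (hlow : x < 0 → ε = 0) (hhigh : x > 1 → ε = 1) :
    x + γ * (δ - ε) ∈ Set.Icc (-γ) (1 + γ) := by
  obtain ⟨hδ0, hδ1⟩ := hδ
  obtain ⟨hx0, hx1⟩ := hx
  obtain ⟨hε0, hε1⟩ := hε
  rcases lt_or_ge x 0 with hneg | hnonneg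
  · rw [hlow hneg]
    constructor <;> nlinarith
  rcases lt_or_ge 1 x with hbig | hsmall
  · rw [hhigh hbig]
    constructor <;> nlinarith
  · constructor <;> nlinarith

theorem acp_mem_Icc (hγ : 0 ≤ γ) (hδ : δ ∈ Set.Icc 0 1) (he : ∀ t, e t ∈ Set.Icc 0 1)
    (hrec : ∀ t, 1 ≤ t → d (t + 1) = d t + γ * (δ - e t)) (hinit : d 1 = δ)
    (hlow : ∀ t, 1 ≤ t → d t < 0 → e t = 0) (hhigh : ∀ t, 1 ≤ t → d t > 1 → e t = 1) :
    ∀ t, 1 ≤ t → d t ∈ Set.Icc (-γ) (1 + γ) := by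
  intro t ht
  induction t, ht using Nat.le_induction with
  | base => rw [hinit]; constructor <;> linarith [hδ.1, hδ.2]
  | succ t ht ih =>
    rw [hrec t ht]
    exact acp_step_mem_Icc hγ hδ ih (he t) (hlow t ht) (hhigh t ht)

theorem acp_eq_add_sum (hrec : ∀ t, 1 ≤ t → d (t + 1) = d t + γ * (δ - e t)) (T : ℕ) :
    d (T + 1) = d 1 + γ * ∑ t ∈ Icc 1 T, (δ - e t) := by
  induction T with
  | zero => simp
  | succ T ih =>
    rw [hrec (T + 1) T.succ_pos, ih, sum_Icc_succ_top (by omega)]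
    ring

theorem abs_sum_acp_error_le (hγ : 0 < γ) (hδ : δ ∈ Set.Icc 0 1) (he : ∀ t, e t ∈ Set.Icc 0 1)
    (hrec : ∀ t, 1 ≤ t → d (t + 1) = d t + γ * (δ - e t)) (hinit : d 1 = δ)
    (hlow : ∀ t, 1 ≤ t → d t < 0 → e t = 0) (hhigh : ∀ t, 1 ≤ t → d t > 1 → e t = 1) (T : ℕ) :
    |∑ t ∈ Icc 1 T, (δ - e t)| ≤ (1 + γ) / γ := by
  obtain ⟨hlo, hhi⟩ :=
    acp_mem_Icc hγ.le hδ he hrec hinit hlow hhigh (T + 1) (Nat.le_add_left 1 T)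
  rw [acp_eq_add_sum hrec, hinit] at hlo hhi
  have hscaled : |γ * ∑ t ∈ Icc 1 T, (δ - e t)| ≤ 1 + γ :=
    abs_le.mpr ⟨by linarith [hδ.2], by linarith [hδ.1]⟩
  rw [abs_mul, abs_of_pos hγ] at hscaled
  rw [le_div_iff₀ hγ]
  linarith

end Deterministic

theorem tendsto_average_of_abs_sum_sub_le {a : ℕ → ℝ} {L M : ℝ}
    (h : ∀ T, |∑ t ∈ Icc 1 T, (a t - L)| ≤ M) :
    Tendsto (fun T : ℕ => (1 / (T : ℝ)) * ∑ t ∈ Icc 1 T, a t) atTop (nhds L) := by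
  rw [tendsto_iff_norm_sub_tendsto_zero]
  refine squeeze_zero' (Eventually.of_forall fun _ => norm_nonneg _) ?_
    (tendsto_const_div_atTop_nhds_zero_nat M)
  filter_upwards [eventually_ge_atTop 1] with T hT
  have hT : (0 : ℝ) < T := by exact_mod_cast hT
  have hsum : ∑ t ∈ Icc 1 T, (a t - L) = ∑ t ∈ Icc 1 T, a t - T * L := by
    simp [sum_sub_distrib]
  calc ‖1 / (T : ℝ) * ∑ t ∈ Icc 1 T, a t - L‖ = |∑ t ∈ Icc 1 T, (a t - L)| / T := by
        rw [Real.norm_eq_abs, hsum, ← abs_of_pos hT, ← abs_div, abs_of_pos hT]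
        congr 1
        field_simp
    _ ≤ M / T := by gcongr; exact h T

theorem abs_integral_le_of_forall_abs_le {Ω : Type*} [MeasurableSpace Ω] (μ : Measure Ω)
    [IsProbabilityMeasure μ] {f : Ω → ℝ} {M : ℝ} (h : ∀ ω, |f ω| ≤ M) :
    |∫ ω, f ω ∂μ| ≤ M := by
  simpa using norm_integral_le_of_norm_le_const (μ := μ) (f := f) (Eventually.of_forall h)

/-- Asymptotic form of Lemma 1: the time-averaged coverage probability of the
adaptive conformal prediction regions converges to the target `1 − δ`. -/
theorem acp_average_coverage_limit
    {Ω : Type*} [MeasurableSpace Ω] (μ : Measure Ω) [IsProbabilityMeasure μ]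
    (γ δ : ℝ) (hγ : 0 < γ) (hδ : δ ∈ Set.Ioo (0 : ℝ) 1)
    (R C : ℕ → Ω → ℝ)
    (hR : ∀ t, Measurable (R t)) (hC : ∀ t, Measurable (C t))
    (e : ℕ → Ω → ℝ)
    (he : ∀ t ω, e t ω = if R t ω > C t ω then 1 else 0)
    (δ' : ℕ → Ω → ℝ)
    (hrec : ∀ t, 1 ≤ t → ∀ ω, δ' (t + 1) ω = δ' t ω + γ * (δ - e t ω))
    (hinit : ∀ ω, δ' 1 ω = δ)
    (hlow : ∀ t, 1 ≤ t → ∀ ω, δ' t ω < 0 → e t ω = 0)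
    (hhigh : ∀ t, 1 ≤ t → ∀ ω, δ' t ω > 1 → e t ω = 1) :
    Tendsto
      (fun T : ℕ => (1 / (T : ℝ)) * ∑ t ∈ Finset.Icc 1 T, (μ {ω | R t ω ≤ C t ω}).toReal)
      atTop (nhds (1 - δ)) := by
  have he01 : ∀ t ω, e t ω ∈ Set.Icc (0 : ℝ) 1 := fun t ω => by
    rw [he]; split_ifs <;> simp
  have hpath (T : ℕ) (ω : Ω) : |∑ t ∈ Icc 1 T, (δ - e t ω)| ≤ (1 + γ) / γ :=
    abs_sum_acp_error_le hγ (Set.Ioo_subset_Icc_self hδ) (he01 · ω) (hrec · · ω) (hinit ω)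
      (hlow · · ω) (hhigh · · ω) T
  have hcover (t : ℕ) (ω : Ω) :
      δ - e t ω = {ω | R t ω ≤ C t ω}.indicator 1 ω - (1 - δ) := by
    by_cases h : R t ω ≤ C t ω <;> simp [he, h]
  have hmeas (t : ℕ) : MeasurableSet {ω | R t ω ≤ C t ω} := measurableSet_le (hR t) (hC t)
  have hind (t : ℕ) : Integrable ({ω | R t ω ≤ C t ω}.indicator (1 : Ω → ℝ)) μ :=
    (integrable_const (1 : ℝ)).indicator (hmeas t)
  have hint (t : ℕ) : Integrable (fun ω => δ - e t ω) μ := by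
    simp_rw [hcover t]
    exact (hind t).sub (integrable_const _)
  have hcoverage (t : ℕ) :
      ∫ ω, (δ - e t ω) ∂μ = (μ {ω | R t ω ≤ C t ω}).toReal - (1 - δ) := by
    simp_rw [hcover t]
    rw [integral_sub (hind t) (integrable_const _), integral_indicator_one (hmeas t),
      integral_const, measureReal_def]
    simp
  refine tendsto_average_of_abs_sum_sub_le (M := (1 + γ) / γ) fun T => ?_
  rw [← sum_congr rfl fun t _ => hcoverage t, ← integral_finsetSum _ fun t _ => hint t]
  exact abs_integral_le_of_forall_abs_le μ (hpath T)
end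

section
/- Let (Ω, 𝔉, μ) be a probability space, γ > 0, δ ∈ (0,1), t₀ ≥ 1, and T ≥ 1. For each t let ρ̂_t, ρ_t, C_t : Ω → ℝ be measurable, set R_t = ρ̂_t − ρ_t, and define e_t(ω) = 1 if R_t(ω) > C_t(ω) and e_t(ω) = 0 otherwise. Let δ'_t : Ω → ℝ satisfy, for every ω, δ'_{t+1}(ω) = δ'_t(ω) + γ·(δ − e_t(ω)) for all t ≥ t₀, with δ'_{t₀}(ω) = δ, and suppose that for every t ≥ t₀ and every ω, δ'_t(ω) < 0 implies e_t(ω) = 0 and δ'_t(ω) > 1 implies e_t(ω) = 1. If moreover ρ̂_t(ω) > C_t(ω) for every t ∈ [t₀, t₀+T−1] and every ω, then 1 − δ − p₁ ≤ (1/T)·∑_{t=t₀}^{t₀+T−1} μ{ω : ρ_t(ω) > 0}, where p₁ = (δ + γ)/(T·γ). -/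
/-!
Along every sample path the effective level of adaptive conformal prediction never drops below
`-γ`: once it is negative no error is made and it can only grow. Telescoping the update
`δ'ₜ₊₁ = δ'ₜ + γ (δ - eₜ)` then bounds the number of errors over `T` steps by `T δ + (δ + γ) / γ`,
and taking expectations bounds the summed miscoverage probabilities by the same quantity.
When the monitor predicts no violation, `ρ̂ₜ > Cₜ`, every step that is covered (`ρ̂ₜ - ρₜ ≤ Cₜ`)
forces `ρₜ > 0`, so each satisfaction probability is at least one minus the miscoverage probability.
-/

open MeasureTheory

section AdaptiveConformal

variable {γ δ : ℝ} {x e : ℕ → ℝ}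

theorem neg_le_of_acp_update (hγ : 0 ≤ γ) (hδ : 0 ≤ δ) (he : ∀ n, e n ≤ 1)
    (hrec : ∀ n, x (n + 1) = x n + γ * (δ - e n)) (hlow : ∀ n, x n < 0 → e n = 0)
    (h₀ : -γ ≤ x 0) (n : ℕ) : -γ ≤ x n := by
  induction n with
  | zero => exact h₀
  | succ n ih =>
    rw [hrec n]
    rcases lt_or_ge (x n) 0 with hneg | hnonneg
    · rw [hlow n hneg]
      nlinarith
    · nlinarith [he n]

theorem acp_sum_err_le (hγ : 0 < γ) (hδ : 0 ≤ δ) (he : ∀ n, e n ≤ 1)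
    (hrec : ∀ n, x (n + 1) = x n + γ * (δ - e n)) (hlow : ∀ n, x n < 0 → e n = 0)
    (h₀ : -γ ≤ x 0) (N : ℕ) : ∑ n ∈ Finset.range N, e n ≤ N * δ + (x 0 + γ) / γ := by
  have htel : ∀ m, x m = x 0 + γ * (m * δ - ∑ n ∈ Finset.range m, e n) := by
    intro m
    induction m with
    | zero => simp
    | succ m ih => rw [hrec, ih, Finset.sum_range_succ]; push_cast; ring
  have hlast := neg_le_of_acp_update hγ.le hδ he hrec hlow h₀ N
  refine le_of_mul_le_mul_left ?_ hγ
  rw [mul_add, mul_div_cancel₀ _ hγ.ne']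
  linarith [htel N]

end AdaptiveConformal

theorem sum_measureReal_le_of_sum_indicator_le {Ω ι : Type*} [MeasurableSpace Ω]
    {μ : Measure Ω} [IsProbabilityMeasure μ] {I : Finset ι} {s : ι → Set Ω} {c : ℝ}
    (hs : ∀ i, MeasurableSet (s i)) (h : ∀ ω, ∑ i ∈ I, (s i).indicator 1 ω ≤ c) :
    ∑ i ∈ I, μ.real (s i) ≤ c := by
  have hint : ∀ i ∈ I, Integrable ((s i).indicator (1 : Ω → ℝ)) μ :=
    fun i _ ↦ (integrable_const 1).indicator (hs i)
  calc ∑ i ∈ I, μ.real (s i) = ∫ ω, ∑ i ∈ I, (s i).indicator 1 ω ∂μ := by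
        rw [integral_finsetSum I hint]
        exact Finset.sum_congr rfl fun i _ ↦ (integral_indicator_one (hs i)).symm
    _ ≤ ∫ _, c ∂μ := integral_mono (integrable_finsetSum I hint) (integrable_const c) h
    _ = c := by simp

theorem card_sub_le_sum_measureReal_of_compl_subset {Ω ι : Type*} [MeasurableSpace Ω]
    {μ : Measure Ω} [IsProbabilityMeasure μ] {I : Finset ι} {s u : ι → Set Ω} {c : ℝ}
    (hs : ∀ i, MeasurableSet (s i)) (hsu : ∀ i ∈ I, (s i)ᶜ ⊆ u i)
    (h : ∀ ω, ∑ i ∈ I, (s i).indicator 1 ω ≤ c) : I.card - c ≤ ∑ i ∈ I, μ.real (u i) :=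
  calc I.card - c ≤ ∑ i ∈ I, (1 - μ.real (s i)) := by
        rw [Finset.sum_sub_distrib, Finset.sum_const, nsmul_one]
        linarith [sum_measureReal_le_of_sum_indicator_le (μ := μ) hs h]
    _ ≤ ∑ i ∈ I, μ.real (u i) := Finset.sum_le_sum fun i hi ↦ by
        rw [← probReal_compl_eq_one_sub (hs i)]
        exact measureReal_mono (hsu i hi)

theorem acp_safety_guarantee_general
    {Ω : Type*} [MeasurableSpace Ω] (μ : Measure Ω) [IsProbabilityMeasure μ]
    (γ δ : ℝ) (hγ : 0 < γ) (hδ : δ ∈ Set.Ioo (0 : ℝ) 1)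
    (t₀ T : ℕ) (hT : 1 ≤ T)
    (ρhat ρ C : ℕ → Ω → ℝ)
    (hρhat : ∀ t, Measurable (ρhat t)) (hρ : ∀ t, Measurable (ρ t))
    (hC : ∀ t, Measurable (C t))
    (R : ℕ → Ω → ℝ) (hRdef : ∀ t ω, R t ω = ρhat t ω - ρ t ω)
    (e : ℕ → Ω → ℝ)
    (he : ∀ t ω, e t ω = if R t ω > C t ω then 1 else 0)
    (δ' : ℕ → Ω → ℝ)
    (hrec : ∀ t, t₀ ≤ t → ∀ ω, δ' (t + 1) ω = δ' t ω + γ * (δ - e t ω))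
    (hinit : ∀ ω, δ' t₀ ω = δ)
    (hlow : ∀ t, t₀ ≤ t → ∀ ω, δ' t ω < 0 → e t ω = 0)
    (hpred : ∀ t ∈ Finset.Icc t₀ (t₀ + T - 1), ∀ ω, ρhat t ω > C t ω) :
    1 - δ - (δ + γ) / ((T : ℝ) * γ) ≤
      (1 / (T : ℝ)) * ∑ t ∈ Finset.Icc t₀ (t₀ + T - 1), (μ {ω | ρ t ω > 0}).toReal := by
  set miss : ℕ → Set Ω := fun n ↦ {ω | R (t₀ + n) ω > C (t₀ + n) ω}
  have hmiss : ∀ n, MeasurableSet (miss n) := fun n ↦ by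
    simp only [miss, hRdef]
    exact measurableSet_lt (hC _) ((hρhat _).sub (hρ _))
  have herr : ∀ ω, ∑ n ∈ Finset.range T, (miss n).indicator 1 ω ≤ T * δ + (δ + γ) / γ :=
    fun ω ↦ by
      simpa [he, miss, Set.indicator_apply, hinit] using
        acp_sum_err_le (x := fun n ↦ δ' (t₀ + n) ω) hγ hδ.1.le
        (fun n ↦ by rw [he]; split_ifs <;> norm_num)
        (fun n ↦ hrec _ (Nat.le_add_right _ _) ω) (fun n ↦ hlow _ (Nat.le_add_right _ _) ω)
        (by simp only [add_zero, hinit]; linarith [hδ.1]) T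
  have hcovered : ∀ n ∈ Finset.range T, (miss n)ᶜ ⊆ {ω | ρ (t₀ + n) ω > 0} :=
    fun n hn ω hω ↦ by
      have := hpred (t₀ + n) (by simp at hn ⊢; omega) ω
      simp only [miss, Set.mem_compl_iff, Set.mem_ofPred_eq, hRdef, not_lt] at hω ⊢
      linarith
  have hsafe := card_sub_le_sum_measureReal_of_compl_subset (μ := μ) hmiss hcovered herr
  rw [Finset.card_range] at hsafe
  have hIcc : Finset.Icc t₀ (t₀ + T - 1) = Finset.Ico t₀ (t₀ + T) := by
    ext t; simp only [Finset.mem_Icc, Finset.mem_Ico]; omega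
  rw [hIcc, Finset.sum_Ico_eq_sum_range, Nat.add_sub_cancel_left, one_div_mul_eq_div,
    le_div_iff₀ (Nat.cast_pos.2 hT)]
  calc (1 - δ - (δ + γ) / (T * γ)) * T = T - (T * δ + (δ + γ) / γ) := by field_simp; ring
    _ ≤ _ := hsafe

/-- Theorem 1: if the safety monitor predicts no violation at any time
(`ρ̂ t ω > C t ω` for all `t ∈ [t₀, t₀+T−1]` and all `ω`), then the time-averaged
probability that the system actually satisfies the safety specification (`ρ t > 0`)
is at least `1 − δ − p₁`, where `p₁ = (δ + γ)/(T·γ)`. -/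
theorem acp_safety_guarantee
    {Ω : Type*} [MeasurableSpace Ω] (μ : Measure Ω) [IsProbabilityMeasure μ]
    (γ δ : ℝ) (hγ : 0 < γ) (hδ : δ ∈ Set.Ioo (0 : ℝ) 1)
    (t₀ T : ℕ) (ht₀ : 1 ≤ t₀) (hT : 1 ≤ T)
    (ρhat ρ C : ℕ → Ω → ℝ)
    (hρhat : ∀ t, Measurable (ρhat t)) (hρ : ∀ t, Measurable (ρ t))
    (hC : ∀ t, Measurable (C t))
    (R : ℕ → Ω → ℝ) (hRdef : ∀ t ω, R t ω = ρhat t ω - ρ t ω)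
    (e : ℕ → Ω → ℝ)
    (he : ∀ t ω, e t ω = if R t ω > C t ω then 1 else 0)
    (δ' : ℕ → Ω → ℝ)
    (hrec : ∀ t, t₀ ≤ t → ∀ ω, δ' (t + 1) ω = δ' t ω + γ * (δ - e t ω))
    (hinit : ∀ ω, δ' t₀ ω = δ)
    (hlow : ∀ t, t₀ ≤ t → ∀ ω, δ' t ω < 0 → e t ω = 0)
    (hhigh : ∀ t, t₀ ≤ t → ∀ ω, δ' t ω > 1 → e t ω = 1)
    (hpred : ∀ t ∈ Finset.Icc t₀ (t₀ + T - 1), ∀ ω, ρhat t ω > C t ω) :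
    1 - δ - (δ + γ) / ((T : ℝ) * γ) ≤
      (1 / (T : ℝ)) * ∑ t ∈ Finset.Icc t₀ (t₀ + T - 1), (μ {ω | ρ t ω > 0}).toReal :=
  acp_safety_guarantee_general μ γ δ hγ hδ t₀ T hT ρhat ρ C hρhat hρ hC R hRdef e he δ' hrec hinit
    hlow hpred
end
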